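/- Let r > 0, let P be the uniform distribution on the circle L = {(x₁,x₂) ∈ ℝ² : x₁² + x₂² = r²}, and consider conditional constrained quantization with constraint S = L and conditional set β = {(r,0)}. For every n ∈ ℕ with n ≥ 1, the set {(r cos(2π(j−1)/n), r sin(2π(j−1)/n)) : 1 ≤ j ≤ n} forms a conditional constrained optimal set of n-points, and the n-th conditional constrained quantization error equals 2r²(1 − (n/π)·sin(π/n)). -/

import Mathlib

open MeasureTheory Set Filter

/-- The uniform distribution on the circle of radius `r` centered at the origin:
the pushforward of the normalized Lebesgue measure on `[0, 2π)` under
`θ ↦ (r cos θ, r sin θ)`. -/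
noncomputable def uniformCircle (r : ℝ) : Measure (ℝ × ℝ) :=
  Measure.map (fun θ : ℝ => (r * Real.cos θ, r * Real.sin θ))
    ((ENNReal.ofReal (2 * Real.pi))⁻¹ • volume.restrict (Set.Ico 0 (2 * Real.pi)))

/-- The squared Euclidean distance on `ℝ²`. -/
noncomputable def sqDist (p q : ℝ × ℝ) : ℝ := (p.1 - q.1) ^ 2 + (p.2 - q.2) ^ 2

/-- The distortion error of a set `s` of points for the measure `P` on `ℝ²`. -/
noncomputable def distortion2 (P : Measure (ℝ × ℝ)) (s : Set (ℝ × ℝ)) : ℝ :=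
  ∫ x, sInf (sqDist x '' s) ∂P

/-- The `n`-th conditional constrained quantization error for `P` with respect to the
constraint `S` and the conditional set `β`. -/
noncomputable def condConstrQuantError2 (P : Measure (ℝ × ℝ)) (S β : Set (ℝ × ℝ)) (n : ℕ) :
    ℝ :=
  sInf { v : ℝ | ∃ α : Set (ℝ × ℝ),
    α ⊆ S ∧ α.Finite ∧ α.ncard ≤ n - β.ncard ∧ v = distortion2 P (α ∪ β) }

/-!
Parametrize the circle by angles and put `x = π / n`. The bump `max (cos θ) (cos x) - cos x` has
integral `2 (sin x - x cos x) ≥ 0` over a period, and for finitely many angles `φ_p` every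
`cos (θ - φ_p)` is at most `cos x` plus the sum of the shifted bumps. Since the squared distance
between the points at angles `θ` and `φ` is `2 r² (1 - cos (θ - φ))`, integrating shows that at
most `n` points on the circle have distortion at least `2 r² (1 - (n / π) sin x)`. Conversely, for
the regular `n`-gon, cut the circle into the `n` arcs of length `2 x` centred at the vertices and
bound the distance to the nearest vertex on each arc by the distance to its central vertex.
-/

open Real

lemma integral_uniformCircle (r : ℝ) {f : ℝ × ℝ → ℝ} (hf : Continuous f) :
    ∫ x, f x ∂uniformCircle r
      = (2 * π)⁻¹ * ∫ θ in 0..2 * π, f (r * cos θ, r * sin θ) := by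
  rw [uniformCircle, integral_map (by fun_prop) hf.aestronglyMeasurable, integral_smul_measure,
    ENNReal.toReal_inv, ENNReal.toReal_ofReal (by positivity), smul_eq_mul,
    intervalIntegral.integral_of_le (by positivity), integral_Ico_eq_integral_Ioo,
    integral_Ioc_eq_integral_Ioo]

lemma continuous_sInf_sqDist_image {s : Set (ℝ × ℝ)} (hs : s.Finite) :
    Continuous fun x => sInf (sqDist x '' s) := by
  rcases s.eq_empty_or_nonempty with rfl | hne
  · simpa using continuous_const
  have hne' : hs.toFinset.Nonempty := hs.toFinset_nonempty.2 hne
  have h : (fun x => sInf (sqDist x '' s)) = fun x => hs.toFinset.inf' hne' (sqDist x) := by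
    funext x; rw [Finset.inf'_eq_csInf_image, hs.coe_toFinset]
  rw [h]
  exact Continuous.finset_inf'_apply hne' fun p _ => by unfold sqDist; fun_prop

lemma distortion2_uniformCircle (r : ℝ) {s : Set (ℝ × ℝ)} (hs : s.Finite) :
    distortion2 (uniformCircle r) s
      = (2 * π)⁻¹ * ∫ θ in 0..2 * π, sInf (sqDist (r * cos θ, r * sin θ) '' s) :=
  integral_uniformCircle r (continuous_sInf_sqDist_image hs)

lemma sInf_sqDist_image_le {s : Set (ℝ × ℝ)} {p : ℝ × ℝ} (hp : p ∈ s) (x : ℝ × ℝ) :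
    sInf (sqDist x '' s) ≤ sqDist x p :=
  csInf_le ⟨0, by rintro _ ⟨q, -, rfl⟩; unfold sqDist; positivity⟩ (mem_image_of_mem _ hp)

lemma sqDist_circle (r θ φ : ℝ) :
    sqDist (r * cos θ, r * sin θ) (r * cos φ, r * sin φ) = 2 * r ^ 2 * (1 - cos (θ - φ)) := by
  simp only [sqDist, cos_sub]
  linear_combination r ^ 2 * (sin_sq_add_cos_sq θ + sin_sq_add_cos_sq φ)

lemma exists_eq_mul_cos_mul_sin {r : ℝ} (hr : 0 < r) {p : ℝ × ℝ}
    (hp : p.1 ^ 2 + p.2 ^ 2 = r ^ 2) : ∃ φ, p = (r * cos φ, r * sin φ) := by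
  set z : ℂ := ⟨p.1, p.2⟩
  have hz : ‖z‖ = r := by
    rw [Complex.norm_def, Complex.normSq_mk, ← sq, ← sq, hp, sqrt_sq hr.le]
  have hz0 : z ≠ 0 := norm_ne_zero_iff.1 (hz ▸ hr.ne')
  refine ⟨Complex.arg z, Prod.ext ?_ ?_⟩
  · rw [Complex.cos_arg hz0, hz]; field_simp; rfl
  · rw [Complex.sin_arg, hz]; field_simp; rfl

lemma cos_le_cos_of_le_abs {x θ : ℝ} (hx : 0 ≤ x) (h : x ≤ |θ|) (hθ : |θ| ≤ π) :
    cos θ ≤ cos x := by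
  rw [← cos_abs θ]; exact cos_le_cos_of_nonneg_of_le_pi hx hθ h

lemma cos_le_cos_of_abs_le {x θ : ℝ} (h : |θ| ≤ x) (hx : x ≤ π) : cos x ≤ cos θ := by
  rw [← cos_abs θ]; exact cos_le_cos_of_nonneg_of_le_pi (abs_nonneg θ) hx h

lemma integral_max_cos_sub {x : ℝ} (hx : 0 ≤ x) (hxπ : x ≤ π) (φ : ℝ) :
    ∫ θ in 0..2 * π, max (cos (θ - φ)) (cos x) = 2 * sin x + (2 * π - 2 * x) * cos x := by
  set g : ℝ → ℝ := fun θ => max (cos θ) (cos x)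
  have hint : ∀ a b, IntervalIntegrable g volume a b := fun a b =>
    (continuous_cos.max continuous_const).intervalIntegrable a b
  have hout : ∀ a b, a ≤ b → (∀ θ ∈ Icc a b, x ≤ |θ| ∧ |θ| ≤ π) →
      ∫ θ in a..b, g θ = (b - a) * cos x := fun a b hab h => by
    rw [intervalIntegral.integral_congr (g := fun _ => cos x), intervalIntegral.integral_const,
      smul_eq_mul]
    intro θ hθ
    rw [uIcc_of_le hab] at hθ
    exact max_eq_right (cos_le_cos_of_le_abs hx (h θ hθ).1 (h θ hθ).2)
  have hin : ∫ θ in -x..x, g θ = 2 * sin x := by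
    rw [intervalIntegral.integral_congr (g := cos), integral_cos, sin_neg, sub_neg_eq_add,
      two_mul]
    intro θ hθ
    rw [uIcc_of_le (by linarith)] at hθ
    exact max_eq_left (cos_le_cos_of_abs_le (abs_le.2 hθ) hxπ)
  have hperiod : ∫ θ in 0..2 * π, g (θ - φ) = ∫ θ in -π..π, g θ := by
    have hper : Function.Periodic g (2 * π) := fun θ => by simp [g]
    rw [intervalIntegral.integral_comp_sub_right, zero_sub, show 2 * π - φ = -φ + 2 * π by ring,
      hper.intervalIntegral_add_eq (-φ) (-π), show -π + 2 * π = π by ring]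
  rw [hperiod,
    ← intervalIntegral.integral_add_adjacent_intervals (hint _ x) (hint x _),
    ← intervalIntegral.integral_add_adjacent_intervals (hint _ (-x)) (hint (-x) _), hin,
    hout (-π) (-x) (by linarith) fun θ hθ =>
      ⟨le_abs.2 (Or.inr (by linarith [hθ.2])), abs_le.2 ⟨hθ.1, by linarith [hθ.2]⟩⟩,
    hout x π hxπ fun θ hθ =>
      ⟨le_abs.2 (Or.inl hθ.1), abs_le.2 ⟨by linarith [hθ.1], hθ.2⟩⟩]
  ring

lemma le_add_sum_max_sub {ι : Type*} {t : Finset ι} {i : ι} (hi : i ∈ t) (f : ι → ℝ)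
    (c : ℝ) :
    f i ≤ c + ∑ j ∈ t, (max (f j) c - c) := by
  have := Finset.single_le_sum (f := fun j => max (f j) c - c)
    (fun j _ => sub_nonneg.2 (le_max_right _ _)) hi
  linarith [le_max_left (f i) c]

lemma integral_sum_max_cos_sub {ι : Type*} (t : Finset ι) (φ : ι → ℝ) {x : ℝ}
    (hx : 0 ≤ x) (hxπ : x ≤ π) :
    ∫ θ in 0..2 * π, ∑ i ∈ t, (max (cos (θ - φ i)) (cos x) - cos x)
      = t.card * (2 * (sin x - x * cos x)) := by
  have hterm : ∀ i ∈ t, ∫ θ in 0..2 * π, (max (cos (θ - φ i)) (cos x) - cos x)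
      = 2 * (sin x - x * cos x) := fun i _ => by
    rw [intervalIntegral.integral_sub (by apply Continuous.intervalIntegrable; fun_prop)
      intervalIntegrable_const, integral_max_cos_sub hx hxπ, intervalIntegral.integral_const,
      smul_eq_mul]
    ring
  rw [intervalIntegral.integral_finsetSum fun i _ => by
      apply Continuous.intervalIntegrable; fun_prop,
    Finset.sum_congr rfl hterm, Finset.sum_const, nsmul_eq_mul]

lemma mul_cos_le_sin {x : ℝ} (hx : 0 ≤ x) (hxπ : x ≤ π) : x * cos x ≤ sin x := by
  rcases hx.eq_or_lt with rfl | hx0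
  · simp
  rcases lt_or_ge x (π / 2) with h | h
  · have hc : 0 < cos x := cos_pos_of_mem_Ioo ⟨by linarith, h⟩
    have ht := lt_tan hx0 h
    rw [tan_eq_sin_div_cos, lt_div_iff₀ hc] at ht
    linarith
  · nlinarith [cos_nonpos_of_pi_div_two_le_of_le h (by linarith [pi_pos]),
      sin_nonneg_of_nonneg_of_le_pi hx hxπ]

theorem le_distortion2_uniformCircle_of_ncard_le {r : ℝ} (hr : 0 < r) {n : ℕ} (hn : 0 < n)
    {s : Set (ℝ × ℝ)} (hsL : s ⊆ {p | p.1 ^ 2 + p.2 ^ 2 = r ^ 2}) (hs : s.Finite)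
    (hne : s.Nonempty) (hcard : s.ncard ≤ n) :
    2 * r ^ 2 * (1 - n / π * sin (π / n)) ≤ distortion2 (uniformCircle r) s := by
  choose! φ hφ using fun p (hp : p ∈ s) => exists_eq_mul_cos_mul_sin hr (hsL hp)
  set x := π / n
  have hx : 0 < x := by positivity
  have hxπ : x ≤ π := div_le_self pi_pos.le (by exact_mod_cast hn)
  have hnx : n * x = π := mul_div_cancel₀ π (by positivity)
  set t := hs.toFinset
  set bumps : ℝ → ℝ := fun θ => ∑ p ∈ t, (max (cos (θ - φ p)) (cos x) - cos x)
  have hpt : ∀ θ, 2 * r ^ 2 * (1 - cos x - bumps θ)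
      ≤ sInf (sqDist (r * cos θ, r * sin θ) '' s) := fun θ => by
    refine le_csInf (hne.image _) ?_
    rintro _ ⟨p, hp, rfl⟩
    have := le_add_sum_max_sub (hs.mem_toFinset.2 hp) (fun q => cos (θ - φ q)) (cos x)
    rw [hφ p hp, sqDist_circle]
    nlinarith [sq_nonneg r]
  have hint : ∫ θ in 0..2 * π, 2 * r ^ 2 * (1 - cos x - bumps θ)
      = 2 * r ^ 2 * (2 * π * (1 - cos x) - t.card * (2 * (sin x - x * cos x))) := by
    rw [intervalIntegral.integral_const_mul, intervalIntegral.integral_sub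
      intervalIntegrable_const (by apply Continuous.intervalIntegrable; fun_prop),
      integral_sum_max_cos_sub t φ hx.le hxπ, intervalIntegral.integral_const, smul_eq_mul]
    ring
  have hcard' : (t.card : ℝ) ≤ n := by
    rw [← Set.ncard_eq_toFinset_card s hs]; exact_mod_cast hcard
  set K := 2 * (sin x - x * cos x)
  calc 2 * r ^ 2 * (1 - n / π * sin (π / n))
      = (2 * π)⁻¹ * (2 * r ^ 2 * (2 * π * (1 - cos x) - n * K)) := by
        rw [← hnx]; field_simp; ring
    _ ≤ (2 * π)⁻¹ * (2 * r ^ 2 * (2 * π * (1 - cos x) - t.card * K)) := by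
        have := mul_cos_le_sin hx.le hxπ
        gcongr
    _ ≤ distortion2 (uniformCircle r) s := by
        rw [← hint, distortion2_uniformCircle r hs]
        gcongr
        have hcont := (continuous_sInf_sqDist_image hs).comp
          (show Continuous fun θ : ℝ => (r * cos θ, r * sin θ) by fun_prop)
        exact intervalIntegral.integral_mono_on (by positivity)
          (by apply Continuous.intervalIntegrable; fun_prop) (hcont.intervalIntegrable _ _)
          fun θ _ => hpt θ

theorem distortion2_uniformCircle_le_of_vertices_mem {r : ℝ} {n : ℕ} (hn : 0 < n)
    {s : Set (ℝ × ℝ)} (hs : s.Finite)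
    (hpoly : ∀ k < n, (r * cos (2 * π * k / n), r * sin (2 * π * k / n)) ∈ s) :
    distortion2 (uniformCircle r) s ≤ 2 * r ^ 2 * (1 - n / π * sin (π / n)) := by
  set x := π / n
  have hx : 0 < x := by positivity
  have hnx : n * x = π := mul_div_cancel₀ π (by positivity)
  set D : ℝ → ℝ := fun θ => sInf (sqDist (r * cos θ, r * sin θ) '' s)
  have hD : Continuous D := (continuous_sInf_sqDist_image hs).comp (by fun_prop)
  set a : ℕ → ℝ := fun k => (2 * k - 1) * x
  have hpiece : ∀ k < n, ∫ θ in a k..a (k + 1), D θ ≤ 2 * r ^ 2 * (2 * x - 2 * sin x) := by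
    intro k hk
    have hvertex : ∀ θ, D θ ≤ 2 * r ^ 2 * (1 - cos (θ - 2 * k * x)) := fun θ => by
      rw [← sqDist_circle, show 2 * k * x = 2 * π * k / n by ring]
      exact sInf_sqDist_image_le (hpoly k hk) _
    calc ∫ θ in a k..a (k + 1), D θ
        ≤ ∫ θ in a k..a (k + 1), 2 * r ^ 2 * (1 - cos (θ - 2 * k * x)) :=
          intervalIntegral.integral_mono_on (by simp only [a]; push_cast; nlinarith)
            (hD.intervalIntegrable _ _) (by apply Continuous.intervalIntegrable; fun_prop)
            fun θ _ => hvertex θ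
      _ = ∫ θ in -x..x, 2 * r ^ 2 * (1 - cos θ) := by
          rw [intervalIntegral.integral_comp_sub_right (fun θ => 2 * r ^ 2 * (1 - cos θ))]
          simp only [a]; push_cast; ring_nf
      _ = 2 * r ^ 2 * (2 * x - 2 * sin x) := by
          rw [intervalIntegral.integral_const_mul, intervalIntegral.integral_sub
            intervalIntegrable_const (by apply Continuous.intervalIntegrable; fun_prop),
            integral_cos, intervalIntegral.integral_const, smul_eq_mul, sin_neg]
          ring
  have hperiod : ∫ θ in 0..2 * π, D θ = ∫ θ in a 0..a n, D θ := by
    have hper : Function.Periodic D (2 * π) := fun θ => by simp [D]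
    rw [show a n = a 0 + 2 * π by simp only [a]; push_cast; linarith, ← zero_add (2 * π),
      hper.intervalIntegral_add_eq 0 (a 0), zero_add]
  calc distortion2 (uniformCircle r) s
      = (2 * π)⁻¹ * ∑ k ∈ Finset.range n, ∫ θ in a k..a (k + 1), D θ := by
        rw [distortion2_uniformCircle r hs, hperiod,
          intervalIntegral.sum_integral_adjacent_intervals fun k _ => hD.intervalIntegrable _ _]
    _ ≤ (2 * π)⁻¹ * ∑ _k ∈ Finset.range n, 2 * r ^ 2 * (2 * x - 2 * sin x) := by
        gcongr with k hk
        exact hpiece k (Finset.mem_range.1 hk)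
    _ = 2 * r ^ 2 * (1 - n / π * sin (π / n)) := by
        rw [Finset.sum_const, Finset.card_range, nsmul_eq_mul, ← hnx]
        field_simp

noncomputable def regularPolygon (r : ℝ) (n : ℕ) : Set (ℝ × ℝ) :=
  (fun j : ℕ => (r * cos (2 * π * ((j : ℝ) - 1) / n), r * sin (2 * π * ((j : ℝ) - 1) / n)))
    '' Icc 1 n

section regularPolygon

variable (r : ℝ) (n : ℕ)

lemma regularPolygon_finite : (regularPolygon r n).Finite := (finite_Icc 1 n).image _

lemma regularPolygon_subset_circle :
    regularPolygon r n ⊆ {p | p.1 ^ 2 + p.2 ^ 2 = r ^ 2} := by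
  rintro _ ⟨j, -, rfl⟩
  show _ = _
  linear_combination r ^ 2 * sin_sq_add_cos_sq (2 * π * ((j : ℝ) - 1) / n)

lemma ncard_regularPolygon_le : (regularPolygon r n).ncard ≤ n :=
  (ncard_image_le (finite_Icc 1 n)).trans (by simp)

variable {r n}

lemma vertex_mem_regularPolygon {k : ℕ} (hk : k < n) :
    (r * cos (2 * π * k / n), r * sin (2 * π * k / n)) ∈ regularPolygon r n :=
  ⟨k + 1, ⟨by omega, by omega⟩, by push_cast; ring_nf⟩

lemma mk_zero_mem_regularPolygon (hn : 0 < n) : (r, 0) ∈ regularPolygon r n := by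
  simpa using vertex_mem_regularPolygon (r := r) hn

theorem distortion2_regularPolygon (hr : 0 < r) (hn : 0 < n) :
    distortion2 (uniformCircle r) (regularPolygon r n) = 2 * r ^ 2 * (1 - n / π * sin (π / n)) :=
  le_antisymm (distortion2_uniformCircle_le_of_vertices_mem hn (regularPolygon_finite r n)
      fun _ hk => vertex_mem_regularPolygon hk)
    (le_distortion2_uniformCircle_of_ncard_le hr hn (regularPolygon_subset_circle r n)
      (regularPolygon_finite r n) ⟨_, mk_zero_mem_regularPolygon hn⟩
      (ncard_regularPolygon_le r n))

end regularPolygon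

/-- Theorem 3.4: for the uniform distribution on the circle of radius `r`, with constraint the
circle itself and conditional set `{(r, 0)}`, the `n`-th conditional constrained quantization
error equals `2r²(1 - (n/π) sin(π/n))`, attained by the `n`-th roots of unity scaled by `r`. -/
theorem stmt8 (r : ℝ) (hr : 0 < r) (n : ℕ) (hn : 1 ≤ n) :
    condConstrQuantError2 (uniformCircle r)
        {p : ℝ × ℝ | p.1 ^ 2 + p.2 ^ 2 = r ^ 2} {(r, 0)} n
      = 2 * r ^ 2 * (1 - (n : ℝ) / Real.pi * Real.sin (Real.pi / n))
    ∧ distortion2 (uniformCircle r)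
        ((fun j : ℕ => (r * Real.cos (2 * Real.pi * ((j : ℝ) - 1) / n),
                        r * Real.sin (2 * Real.pi * ((j : ℝ) - 1) / n))) '' Set.Icc 1 n)
      = 2 * r ^ 2 * (1 - (n : ℝ) / Real.pi * Real.sin (Real.pi / n)) := by
  have hG := distortion2_regularPolygon hr hn
  refine ⟨IsLeast.csInf_eq ⟨?_, ?_⟩, hG⟩
  · have hmem := mk_zero_mem_regularPolygon (r := r) hn
    refine ⟨regularPolygon r n \ {(r, 0)},
      sdiff_subset.trans (regularPolygon_subset_circle r n), (regularPolygon_finite r n).sdiff,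
      ?_, ?_⟩
    · have := ncard_regularPolygon_le r n
      rw [ncard_singleton, ncard_sdiff_singleton_of_mem hmem]
      omega
    · rw [sdiff_union_of_subset (singleton_subset_iff.2 hmem), hG]
  · rintro _ ⟨α, hαL, hα, hαcard, rfl⟩
    have hcard := ncard_union_le α {(r, 0)}
    rw [ncard_singleton] at hαcard hcard
    exact le_distortion2_uniformCircle_of_ncard_le hr hn (union_subset hαL (by simp))
      (hα.union (finite_singleton _)) ⟨(r, 0), Or.inr rfl⟩ (by omega)
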